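/- Let N be a finite set with |N| ≥ 3, let M ⊂ N with |M| ≥ 2, let B be a min-balanced set system on M, and let S := B ∪ {M}, a min-semi-balanced system on N with exceptional set M. Then B is reducible (i.e., there exists ∅ ≠ E ⊂ M such that χ_E is a conic combination of {χ_S : S ∈ B, S ⊂ E}) if and only if S has a decomposition (i.e., there exists E ⊆ N with E ∉ S ∪ {∅, N} such that E is an exceptional set within S ∪ {E}). -/
import Mathlib


open Finset

variable {α : Type*} [Fintype α] [DecidableEq α]

/-- Incidence (0/1 indicator) vector of a subset `S` of the player set. -/
def chi (S : Finset α) : α → ℝ := fun i => if i ∈ S then 1 else 0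

/-- A non-trivial set system on `N`: nonempty, not containing `∅` nor `N`. -/
def IsNontrivial (𝒮 : Finset (Finset α)) : Prop :=
  𝒮.Nonempty ∧ ∅ ∉ 𝒮 ∧ (Finset.univ : Finset α) ∉ 𝒮

/-- A combination is semi-conic if at most one coefficient is strictly negative. -/
def SemiConic (𝒮 : Finset (Finset α)) (lam : Finset α → ℝ) : Prop :=
  (𝒮.filter fun S => lam S < 0).card ≤ 1

/-- The combination `∑_{S ∈ 𝒮} lam S • χ_S` yields the constant vector `[r,…,r]`. -/
def CombYields (𝒮 : Finset (Finset α)) (lam : Finset α → ℝ) (r : ℝ) : Prop :=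
  ∀ i : α, ∑ S ∈ 𝒮, lam S * chi S i = r

/-- A semi-balanced set system on `N`. -/
def IsSemiBalanced (𝒮 : Finset (Finset α)) : Prop :=
  IsNontrivial 𝒮 ∧ ∃ (lam : Finset α → ℝ) (r : ℝ),
    CombYields 𝒮 lam r ∧ SemiConic 𝒮 lam ∧ ∀ S ∈ 𝒮, lam S ≠ 0

/-- A minimal semi-balanced set system on `N`. -/
def IsMinSemiBalanced (𝒮 : Finset (Finset α)) : Prop :=
  IsSemiBalanced 𝒮 ∧ ∀ 𝒞 ⊂ 𝒮, ¬ IsSemiBalanced 𝒞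

/-- A balanced set system on `N`. -/
def IsBalanced (ℬ : Finset (Finset α)) : Prop :=
  IsNontrivial ℬ ∧ ∃ lam : Finset α → ℝ,
    (∀ S ∈ ℬ, 0 < lam S) ∧ ∀ i : α, ∑ S ∈ ℬ, lam S * chi S i = 1

/-- A minimal balanced set system on `N`. -/
def IsMinBalanced (ℬ : Finset (Finset α)) : Prop :=
  IsBalanced ℬ ∧ ∀ 𝒞 ⊂ ℬ, ¬ IsBalanced 𝒞

/-- A set `T ∈ 𝒮` is exceptional within `𝒮`. -/
def IsExceptional (𝒮 : Finset (Finset α)) (T : Finset α) : Prop :=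
  T ∈ 𝒮 ∧ ∃ (lam : Finset α → ℝ) (r : ℝ),
    CombYields 𝒮 lam r ∧ lam T < 0 ∧ ∀ S ∈ 𝒮, S ≠ T → 0 ≤ lam S

/-- `ℬ` is a balanced set system on the subset `M`. -/
def IsBalancedOn (M : Finset α) (ℬ : Finset (Finset α)) : Prop :=
  ℬ.Nonempty ∧ (∀ S ∈ ℬ, S ≠ ∅ ∧ S ⊂ M) ∧
  ∃ lam : Finset α → ℝ, (∀ S ∈ ℬ, 0 < lam S) ∧
    ∀ i : α, ∑ S ∈ ℬ, lam S * chi S i = chi M i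

/-- `ℬ` is a minimal balanced set system on the subset `M`. -/
def IsMinBalancedOn (M : Finset α) (ℬ : Finset (Finset α)) : Prop :=
  IsBalancedOn M ℬ ∧ ∀ 𝒞 ⊂ ℬ, ¬ IsBalancedOn M 𝒞

theorem stmt18 (h3 : 3 ≤ Fintype.card α) (M : Finset α)
    (hM : M ⊂ (Finset.univ : Finset α)) (hMcard : 2 ≤ M.card)
    (ℬ : Finset (Finset α)) (hB : IsMinBalancedOn M ℬ) (hMB : M ∉ ℬ)
    (hS : IsMinSemiBalanced (insert M ℬ))
    (hexc : IsExceptional (insert M ℬ) M) :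
    (∃ E : Finset α, E ≠ ∅ ∧ E ⊂ M ∧ ∃ lam : Finset α → ℝ,
        (∀ S : Finset α, 0 ≤ lam S) ∧
        ∀ i : α, ∑ S ∈ ℬ.filter (fun S => S ⊂ E), lam S * chi S i = chi E i) ↔
    (∃ E : Finset α, E ∉ insert M ℬ ∧ E ≠ ∅ ∧ E ≠ (Finset.univ : Finset α) ∧
        IsExceptional (insert E (insert M ℬ)) E) := by
  obtain ⟨⟨hBne, hBprop, w, hwpos, hweq⟩, hmin⟩ := hB
  have hchi1 : ∀ (S : Finset α) (i : α), i ∈ S → chi S i = 1 := by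
    intro S i h; simp [chi, h]
  have hchi0 : ∀ (S : Finset α) (i : α), i ∉ S → chi S i = 0 := by
    intro S i h; simp [chi, h]
  have hchinn : ∀ (S : Finset α) (i : α), 0 ≤ chi S i := by
    intro S i; simp only [chi]; split <;> norm_num
  constructor
  · rintro ⟨E, hEne, hEM, lam, hlam0, hlamEq⟩
    have hnEE : ¬ E ⊂ E := fun h => (Finset.ssubset_iff_subset_ne.mp h).2 rfl
    -- E is not a member of ℬ (else ℬ.erase E would still be balanced on M)
    have hEB : E ∉ ℬ := by
      intro hEB
      obtain ⟨i0, hi0M, hi0E⟩ := Finset.exists_of_ssubset hEM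
      apply hmin (ℬ.erase E) (Finset.erase_ssubset hEB)
      refine ⟨?_, fun S hS => hBprop S (Finset.mem_of_mem_erase hS),
        fun S => w S + w E * (if S ⊂ E then lam S else 0), ?_, ?_⟩
      · rw [Finset.nonempty_iff_ne_empty]
        intro hempty
        have hBE : ℬ = {E} := by
          rcases (Finset.erase_eq_empty_iff ℬ E).mp hempty with h | h
          · exact absurd (h ▸ hEB) (Finset.notMem_empty E)
          · exact h
        have h1 := hweq i0
        rw [hBE] at h1
        simp [hchi1 M i0 hi0M, hchi0 E i0 hi0E] at h1
      · intro S hS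
        dsimp only
        have h1 := hwpos S (Finset.mem_of_mem_erase hS)
        have h2 : 0 ≤ w E * (if S ⊂ E then lam S else 0) := by
          apply mul_nonneg (le_of_lt (hwpos E hEB))
          split
          · exact hlam0 S
          · exact le_refl 0
        linarith
      · intro i
        dsimp only
        have key : ∑ S ∈ ℬ.erase E, (if S ⊂ E then lam S else 0) * chi S i
            = chi E i := by
          rw [Finset.sum_erase _ (by rw [if_neg hnEE, zero_mul])]
          rw [← hlamEq i, Finset.sum_filter]
          apply Finset.sum_congr rfl
          intro S _
          by_cases h : S ⊂ E
          · rw [if_pos h, if_pos h]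
          · rw [if_neg h, if_neg h, zero_mul]
        have key2 : ∑ S ∈ ℬ.erase E, w S * chi S i
            = chi M i - w E * chi E i := by
          have h5 := Finset.sum_erase_add ℬ (fun S => w S * chi S i) hEB
          rw [hweq i] at h5
          linarith
        calc ∑ S ∈ ℬ.erase E, (w S + w E * (if S ⊂ E then lam S else 0)) * chi S i
            = ∑ S ∈ ℬ.erase E, (w S * chi S i
              + w E * ((if S ⊂ E then lam S else 0) * chi S i)) := by
              apply Finset.sum_congr rfl; intro S _; ring
          _ = (∑ S ∈ ℬ.erase E, w S * chi S i)
              + w E * ∑ S ∈ ℬ.erase E, (if S ⊂ E then lam S else 0) * chi S i := by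
              rw [Finset.sum_add_distrib, Finset.mul_sum]
          _ = chi M i := by rw [key, key2]; ring
    have hEnM : E ≠ M := hEM.ne
    have hMnE : ¬ (M = E) := fun h => hEnM h.symm
    have hMsE : ¬ (M ⊂ E) := fun h => hnEE (hEM.trans h)
    have hEnT : E ∉ insert M ℬ := by
      simp only [Finset.mem_insert]
      rintro (h | h)
      · exact hEnM h
      · exact hEB h
    refine ⟨E, hEnT, hEne, ?_, ?_⟩
    · intro h
      exact hMsE (hM.trans_eq h.symm)
    · refine ⟨Finset.mem_insert_self E _,
        fun S => if S = E then (-1 : ℝ) else if S ⊂ E then lam S else 0, 0, ?_, ?_, ?_⟩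
      · intro i
        dsimp only
        have hsum : ∑ S ∈ ℬ, (if S = E then (-1 : ℝ)
            else if S ⊂ E then lam S else 0) * chi S i = chi E i := by
          rw [← hlamEq i, Finset.sum_filter]
          apply Finset.sum_congr rfl
          intro S hS
          have hSne : S ≠ E := fun h => hEB (h ▸ hS)
          rw [if_neg hSne]
          by_cases h : S ⊂ E
          · rw [if_pos h, if_pos h]
          · rw [if_neg h, if_neg h, zero_mul]
        rw [Finset.sum_insert hEnT, Finset.sum_insert hMB, hsum,
          if_pos rfl, if_neg hMnE, if_neg hMsE]
        ring
      · simp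
      · intro S _ hSne
        dsimp only
        rw [if_neg hSne]
        split
        · exact hlam0 S
        · exact le_refl 0
  · rintro ⟨E, hEnT, hEne, hEuniv, hET, μ, r, hyield, hEneg, hnonneg⟩
    have hEnM : E ≠ M := fun h => hEnT (h ▸ Finset.mem_insert_self M ℬ)
    have hEB : E ∉ ℬ := fun h => hEnT (Finset.mem_insert_of_mem h)
    have hμB : ∀ S ∈ ℬ, 0 ≤ μ S := fun S hS =>
      hnonneg S (Finset.mem_insert_of_mem (Finset.mem_insert_of_mem hS))
        (fun h => hEB (h ▸ hS))
    have hμM : 0 ≤ μ M :=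
      hnonneg M (Finset.mem_insert_of_mem (Finset.mem_insert_self M ℬ))
        (fun h => hEnM h.symm)
    have hexp : ∀ i : α, μ E * chi E i + μ M * chi M i
        + ∑ S ∈ ℬ, μ S * chi S i = r := by
      intro i
      have h0 := hyield i
      rwa [Finset.sum_insert hEnT, Finset.sum_insert hMB, ← add_assoc] at h0
    have hg0 : ∀ i : α, 0 ≤ ∑ S ∈ ℬ, μ S * chi S i := by
      intro i
      exact Finset.sum_nonneg (fun S hS => mul_nonneg (hμB S hS) (hchinn S i))
    have hgM : ∀ i : α, i ∉ M → ∑ S ∈ ℬ, μ S * chi S i = 0 := by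
      intro i hi
      apply Finset.sum_eq_zero
      intro S hS
      have hni : i ∉ S := fun h => hi ((hBprop S hS).2.subset h)
      rw [hchi0 S i hni, mul_zero]
    -- E ⊆ M
    have hEsubM : E ⊆ M := by
      by_contra hcon
      obtain ⟨j, hjE, hjM⟩ := Finset.not_subset.mp hcon
      have h1 := hexp j
      rw [hgM j hjM, hchi1 E j hjE, hchi0 M j hjM] at h1
      obtain ⟨k, hkE⟩ : ∃ k, k ∉ E := by
        by_contra hc
        push_neg at hc
        exact hEuniv (Finset.eq_univ_iff_forall.mpr hc)
      have h2 := hexp k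
      rw [hchi0 E k hkE] at h2
      have hgk := hg0 k
      have hMk : 0 ≤ μ M * chi M k := mul_nonneg hμM (hchinn M k)
      linarith
    have hEM : E ⊂ M := Finset.ssubset_iff_subset_ne.mpr ⟨hEsubM, hEnM⟩
    -- r = 0
    obtain ⟨i0, _, hi0M⟩ := Finset.exists_of_ssubset hM
    have hi0E : i0 ∉ E := fun h => hi0M (hEsubM h)
    have hr0 : r = 0 := by
      have h1 := hexp i0
      rw [hgM i0 hi0M, hchi0 E i0 hi0E, hchi0 M i0 hi0M] at h1
      linarith
    -- μ M = 0
    obtain ⟨j0, hj0M, hj0E⟩ := Finset.exists_of_ssubset hEM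
    have hμM0 : μ M = 0 := by
      have h1 := hexp j0
      rw [hr0, hchi0 E j0 hj0E, hchi1 M j0 hj0M] at h1
      have h2 := hg0 j0
      linarith
    -- the ℬ-part of the combination equals (-μ E) · χ_E
    have hgE : ∀ i : α, ∑ S ∈ ℬ, μ S * chi S i = (- μ E) * chi E i := by
      intro i
      have h1 := hexp i
      rw [hr0, hμM0, zero_mul, add_zero] at h1
      by_cases hiE : i ∈ E
      · rw [hchi1 E i hiE] at h1 ⊢
        linarith
      · rw [hchi0 E i hiE] at h1 ⊢
        linarith
    -- members of ℬ not strictly inside E have zero coefficient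
    have hμ0 : ∀ S ∈ ℬ, ¬ S ⊂ E → μ S = 0 := by
      intro S hSB hnsub
      have hSne : S ≠ E := fun h => hEB (h ▸ hSB)
      have hnsub' : ¬ S ⊆ E := fun h =>
        hnsub (Finset.ssubset_iff_subset_ne.mpr ⟨h, hSne⟩)
      obtain ⟨k, hkS, hkE⟩ := Finset.not_subset.mp hnsub'
      have h1 := hgE k
      rw [hchi0 E k hkE, mul_zero] at h1
      have h2 := (Finset.sum_eq_zero_iff_of_nonneg
        (fun S hS => mul_nonneg (hμB S hS) (hchinn S k))).mp h1 S hSB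
      rw [hchi1 S k hkS, mul_one] at h2
      exact h2
    have hμEpos : 0 < - μ E := by linarith
    refine ⟨E, hEne, hEM,
      fun S => if S ∈ ℬ then μ S / (- μ E) else 0, ?_, ?_⟩
    · intro S
      dsimp only
      split
      · exact div_nonneg (hμB S (by assumption)) (le_of_lt hμEpos)
      · exact le_refl 0
    · intro i
      dsimp only
      have key : ∑ S ∈ ℬ.filter (fun S => S ⊂ E), μ S * chi S i
          = ∑ S ∈ ℬ, μ S * chi S i := by
        rw [← Finset.sum_filter_add_sum_filter_not ℬ (fun S => S ⊂ E)
          (fun S => μ S * chi S i)]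
        have hz : ∑ S ∈ ℬ.filter (fun S => ¬ S ⊂ E), μ S * chi S i = 0 := by
          apply Finset.sum_eq_zero
          intro S hSf
          rw [Finset.mem_filter] at hSf
          rw [hμ0 S hSf.1 hSf.2, zero_mul]
        rw [hz, add_zero]
      have step : ∑ S ∈ ℬ.filter (fun S => S ⊂ E),
          (if S ∈ ℬ then μ S / (- μ E) else 0) * chi S i
          = (∑ S ∈ ℬ.filter (fun S => S ⊂ E), μ S * chi S i) / (- μ E) := by
        rw [Finset.sum_div]
        apply Finset.sum_congr rfl
        intro S hSf
        rw [Finset.mem_filter] at hSf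
        rw [if_pos hSf.1]
        ring
      rw [step, key, hgE i, mul_comm, mul_div_assoc,
        div_self (ne_of_gt hμEpos), mul_one]
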